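/- arXiv:0809.4697 — 5 statements merged into one kernel-verified Lean document; each statement's English description precedes it below -/
import Mathlib

section
/- Let G, H₁, H₂ be additive commutative groups, and let η₁ : G →+ H₁ and η₂ : G →+ H₂ be additive group homomorphisms such that the kernel of η₁ is contained in the kernel of η₂. Let M be an n×n matrix with entries in AddMonoidAlgebra (ZMod 2) G, and for i = 1,2 let M(ηᵢ) be the matrix over AddMonoidAlgebra (ZMod 2) Hᵢ obtained by applying the ring homomorphism AddMonoidAlgebra.mapDomainRingHom ηᵢ to each entry of M. If det M(η₁) = 0 then det M(η₂) = 0. -/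
/-!
Taking determinants commutes with the ring homomorphisms `mapDomainRingHom ηᵢ`, so it suffices
that every element of `(ZMod 2)[G]` killed by `η₁` is killed by `η₂`. Since `ker η₁ ≤ ker η₂`,
`η₂ = g ∘ η₁` for some map of sets `g : H₁ → H₂`, and `mapDomain` is functorial along arbitrary
maps, so `mapDomain η₂ x = mapDomain g (mapDomain η₁ x)`.
-/

theorem AddMonoidHom.factorsThrough_of_ker_le {G H₁ H₂ : Type*}
    [AddGroup G] [AddGroup H₁] [AddGroup H₂] {η₁ : G →+ H₁} {η₂ : G →+ H₂}
    (hker : η₁.ker ≤ η₂.ker) : Function.FactorsThrough η₂ η₁ := by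
  intro a b hab
  have hsub : a - b ∈ η₂.ker := hker <| by rw [mem_ker, map_sub, hab, sub_self]
  rwa [mem_ker, map_sub, sub_eq_zero] at hsub

namespace AddMonoidAlgebra

theorem mapDomain_comp {R M N P : Type*} [Semiring R] (f : M → N) (g : N → P) (x : R[M]) :
    mapDomain (g ∘ f) x = mapDomain g (mapDomain f x) := by
  ext; simp [Finsupp.mapDomain_comp]

theorem ker_mapDomainRingHom_le_of_ker_le (R : Type*) {G H₁ H₂ : Type*} [Semiring R]
    [AddGroup G] [AddGroup H₁] [AddGroup H₂] {η₁ : G →+ H₁} {η₂ : G →+ H₂}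
    (hker : η₁.ker ≤ η₂.ker) :
    RingHom.ker (mapDomainRingHom R η₁) ≤ RingHom.ker (mapDomainRingHom R η₂) := by
  intro x hx
  have hfactor : ⇑η₂ = Function.extend η₁ η₂ 0 ∘ η₁ :=
    funext fun a => ((AddMonoidHom.factorsThrough_of_ker_le hker).extend_apply 0 a).symm
  simp only [RingHom.mem_ker, mapDomainRingHom_apply] at hx ⊢
  rw [hfactor, mapDomain_comp, hx, mapDomain_zero]

end AddMonoidAlgebra

theorem det_map_eq_zero_of_ker_le {G H₁ H₂ : Type*}
    [AddCommGroup G] [AddCommGroup H₁] [AddCommGroup H₂]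
    (η₁ : G →+ H₁) (η₂ : G →+ H₂)
    (hker : ∀ g : G, η₁ g = 0 → η₂ g = 0)
    {n : ℕ} (M : Matrix (Fin n) (Fin n) (AddMonoidAlgebra (ZMod 2) G))
    (h : (M.map (AddMonoidAlgebra.mapDomainRingHom (ZMod 2) η₁)).det = 0) :
    (M.map (AddMonoidAlgebra.mapDomainRingHom (ZMod 2) η₂)).det = 0 := by
  rw [← RingHom.mapMatrix_apply, ← RingHom.map_det] at h ⊢
  exact AddMonoidAlgebra.ker_mapDomainRingHom_le_of_ker_le (ZMod 2) (fun g => hker g) h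
end

section
/- Let A be the set of Hahn series x ∈ HahnSeries ℝ (ZMod 2) such that for every real number N, the set of elements of the support of x that are smaller than N is finite. Then A is a subfield of the field HahnSeries ℝ (ZMod 2): it contains 0 and 1, is closed under addition and multiplication, and for every nonzero x ∈ A the inverse x⁻¹ (taken in the field HahnSeries ℝ (ZMod 2)) again lies in A. In particular, the Novikov ring A of formal power series ∑_{r∈ℝ} a_r T^r with a_r ∈ ℤ/2 and only finitely many nonzero a_r with r < N for each N ∈ ℝ, is a field. -/
/-!
Sets that are finite below every bound are bounded below, so the sumset of two of them is again
finite below; since the support of a product lies in the sumset of the supports, such series form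
a subring. For `x ≠ 0` with leading term `c T^v`, the field inverse is
`x⁻¹ = c⁻¹ T^(-v) ∑ₙ yⁿ` with `y = 1 - c⁻¹ T^(-v) x` of positive order. The support of `yⁿ`
lies above `n • y.order`, so by the Archimedean property only finitely many powers of `y` reach
below any given bound, and each of them contributes finitely many exponents there.
-/

open Pointwise

namespace Set

variable {Γ : Type*}

def IsFiniteBelow [LT Γ] (s : Set Γ) : Prop :=
  ∀ N, {r ∈ s | r < N}.Finite

section LT

variable [LT Γ] {s t : Set Γ}

theorem IsFiniteBelow.mono (ht : t.IsFiniteBelow) (hst : s ⊆ t) : s.IsFiniteBelow :=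
  fun N => (ht N).subset fun _ hr => ⟨hst hr.1, hr.2⟩

theorem Finite.isFiniteBelow (hs : s.Finite) : s.IsFiniteBelow :=
  fun _ => hs.subset fun _ hr => hr.1

theorem IsFiniteBelow.union (hs : s.IsFiniteBelow) (ht : t.IsFiniteBelow) :
    (s ∪ t).IsFiniteBelow := fun N =>
  ((hs N).union (ht N)).subset fun _ ⟨hr, hrN⟩ => hr.imp (⟨·, hrN⟩) (⟨·, hrN⟩)

end LT

theorem isFiniteBelow_iUnion [Preorder Γ] {s : ℕ → Set Γ} (hs : ∀ n, (s n).IsFiniteBelow)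
    (hlow : ∀ N, ∃ k, ∀ n ≥ k, ∀ r ∈ s n, N ≤ r) : (⋃ n, s n).IsFiniteBelow := by
  intro N
  obtain ⟨k, hk⟩ := hlow N
  refine ((finite_Iio k).biUnion fun n _ => hs n N).subset ?_
  rintro r ⟨hr, hrN⟩
  obtain ⟨n, hn⟩ := mem_iUnion.mp hr
  have hnk : n < k := not_le.mp fun hkn => (hk n hkn r hn).not_gt hrN
  exact mem_biUnion hnk ⟨hn, hrN⟩

theorem IsFiniteBelow.bddBelow [LinearOrder Γ] [Nonempty Γ] {s : Set Γ} (hs : s.IsFiniteBelow) :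
    BddBelow s := by
  rcases s.eq_empty_or_nonempty with rfl | ⟨a, ha⟩
  · exact bddBelow_empty
  · exact ((hs a).bddBelow.union bddBelow_Ici).mono fun r hr => (lt_or_ge r a).imp (⟨hr, ·⟩) id

theorem IsFiniteBelow.add [AddCommGroup Γ] [LinearOrder Γ] [IsOrderedAddMonoid Γ] {s t : Set Γ}
    (hs : s.IsFiniteBelow) (ht : t.IsFiniteBelow) : (s + t).IsFiniteBelow := by
  intro N
  obtain ⟨a, ha⟩ := hs.bddBelow
  obtain ⟨b, hb⟩ := ht.bddBelow
  refine ((hs (N - b)).image2 (· + ·) (ht (N - a))).subset ?_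
  rintro _ ⟨⟨x, hx, y, hy, rfl⟩, hxy⟩
  refine ⟨x, ⟨hx, lt_sub_iff_add_lt.mpr ?_⟩, y, ⟨hy, lt_sub_iff_add_lt'.mpr ?_⟩, rfl⟩
  · exact (add_le_add le_rfl (hb hy)).trans_lt hxy
  · exact (add_le_add (ha hx) le_rfl).trans_lt hxy

end Set

namespace HahnSeries

theorem isFiniteBelow_support_single {Γ R : Type*} [PartialOrder Γ] [Zero R] (a : Γ) (r : R) :
    (single a r).support.IsFiniteBelow :=
  (Set.finite_singleton a).isFiniteBelow.mono support_single_subset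

variable (Γ R : Type*) [AddCommGroup Γ] [LinearOrder Γ] [IsOrderedAddMonoid Γ]

def novikovSubring [Ring R] : Subring (HahnSeries Γ R) where
  carrier := {x | x.support.IsFiniteBelow}
  zero_mem' := by simp [Set.IsFiniteBelow]
  one_mem' := isFiniteBelow_support_single 0 1
  add_mem' hx hy := (Set.IsFiniteBelow.union hx hy).mono (support_add_subset _ _)
  neg_mem' hx := Set.IsFiniteBelow.mono hx (support_neg_subset _)
  mul_mem' hx hy := (Set.IsFiniteBelow.add hx hy).mono support_mul_subset

variable {Γ R}

theorem single_mem_novikovSubring [Ring R] (a : Γ) (r : R) :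
    single a r ∈ novikovSubring Γ R :=
  isFiniteBelow_support_single a r

theorem hsum_powers_mem_novikovSubring [Archimedean Γ] [CommRing R] [NoZeroDivisors R]
    {y : HahnSeries Γ R} (hy : y ∈ novikovSubring Γ R) :
    (SummableFamily.powers y).hsum ∈ novikovSubring Γ R := by
  rcases eq_or_ne y 0 with rfl | hy0
  · simp [one_mem]
  -- Unless `0 < y.orderTop`, `powers y` is the junk family `single 0 1`.
  by_cases hpos : 0 < y.orderTop
  swap
  · rw [SummableFamily.powers_of_not_orderTop_pos hpos, SummableFamily.hsum_single]
    exact one_mem _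
  have hord : 0 < y.order := (zero_lt_orderTop_iff hy0).mp hpos
  have hlow (N : Γ) : ∃ k, ∀ n ≥ k, ∀ r ∈ (y ^ n).support, N ≤ r := by
    obtain ⟨k, hk⟩ := Archimedean.arch N hord
    refine ⟨k, fun n hn r hr => ?_⟩
    calc N ≤ k • y.order := hk
      _ ≤ n • y.order := nsmul_le_nsmul_left hord.le hn
      _ = (y ^ n).order := (order_pow y n).symm
      _ ≤ r := order_le_of_coeff_ne_zero hr
  refine (Set.isFiniteBelow_iUnion (fun n => pow_mem hy n) hlow).mono ?_
  have hsupp := SummableFamily.support_hsum_subset (s := SummableFamily.powers y)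
  simpa only [SummableFamily.coe_powers hpos] using hsupp

variable (Γ R)

def novikovSubfield [Archimedean Γ] [Field R] : Subfield (HahnSeries Γ R) where
  toSubring := novikovSubring Γ R
  inv_mem' x hx := by
    rw [inv_def]
    exact mul_mem (single_mem_novikovSubring _ _) <| hsum_powers_mem_novikovSubring <|
      sub_mem (novikovSubring Γ R).one_mem (mul_mem (single_mem_novikovSubring _ _) hx)

end HahnSeries

theorem novikov_ring_is_subfield
    (A : Set (HahnSeries ℝ (ZMod 2)))
    (hA : A = {x : HahnSeries ℝ (ZMod 2) |
        ∀ N : ℝ, {r ∈ x.support | r < N}.Finite}) :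
    (0 : HahnSeries ℝ (ZMod 2)) ∈ A ∧
    (1 : HahnSeries ℝ (ZMod 2)) ∈ A ∧
    (∀ x ∈ A, ∀ y ∈ A, x + y ∈ A) ∧
    (∀ x ∈ A, ∀ y ∈ A, x * y ∈ A) ∧
    (∀ x ∈ A, x ≠ 0 → x⁻¹ ∈ A) ∧
    ∃ F : Subfield (HahnSeries ℝ (ZMod 2)), (F : Set (HahnSeries ℝ (ZMod 2))) = A := by
  subst hA
  let F := HahnSeries.novikovSubfield ℝ (ZMod 2)
  exact ⟨F.zero_mem, F.one_mem, fun _ hx _ hy => F.add_mem hx hy,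
    fun _ hx _ hy => F.mul_mem hx hy, fun _ hx _ => F.inv_mem hx, F, rfl⟩
end

section
/- For all natural numbers g ≥ 1 and m ≥ 1, the identity ∑_{i=1}^{m} (−1)^{i+1} · i · C(2g, m−i) = C(2g−2, m−1) holds, where the sum is taken in the integers and C(n,k) denotes the binomial coefficient. -/
open Finset

lemma auxA (n : ℕ) : ∀ m : ℕ,
    ∑ i ∈ Finset.range m, (-1 : ℤ) ^ i * (Nat.choose (n + 1) (m - 1 - i) : ℤ)
      = if m = 0 then 0 else (Nat.choose n (m - 1) : ℤ) := by
  intro m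
  induction m with
  | zero => simp
  | succ m ih =>
    rw [Finset.sum_range_succ']
    have h1 : ∀ i : ℕ, (-1 : ℤ) ^ (i + 1) * (Nat.choose (n + 1) (m + 1 - 1 - (i + 1)) : ℤ)
        = -((-1 : ℤ) ^ i * (Nat.choose (n + 1) (m - 1 - i) : ℤ)) := by
      intro i
      have : m + 1 - 1 - (i + 1) = m - 1 - i := by omega
      rw [this, pow_succ]
      ring
    simp only [h1, Finset.sum_neg_distrib]
    rw [ih]
    rcases Nat.eq_zero_or_pos m with hm | hm
    · subst hm; simp
    · obtain ⟨k, rfl⟩ := Nat.exists_eq_add_of_le hm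
      simp only [Nat.add_sub_cancel_left]
      have : (1 + k : ℕ) = k + 1 := by omega
      rw [this]
      have hne : (k + 1 : ℕ) + 1 ≠ 0 := by omega
      simp only [Nat.add_sub_cancel, pow_zero, one_mul, if_neg (by omega : ¬ k + 1 = 0),
        if_neg (by omega : ¬ k + 1 + 1 = 0)]
      have : (n + 1).choose (k + 1) = n.choose k + n.choose (k + 1) := Nat.choose_succ_succ _ _
      push_cast [this]
      ring

lemma auxS (n : ℕ) : ∀ m : ℕ,
    ∑ i ∈ Finset.range m, (-1 : ℤ) ^ i * (i + 1 : ℤ) * (Nat.choose (n + 2) (m - 1 - i) : ℤ)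
      = if m = 0 then 0 else (Nat.choose n (m - 1) : ℤ) := by
  intro m
  induction m with
  | zero => simp
  | succ m ih =>
    rw [Finset.sum_range_succ']
    have h1 : ∀ i : ℕ, (-1 : ℤ) ^ (i + 1) * (((i + 1 : ℕ) : ℤ) + 1) * (Nat.choose (n + 2) (m + 1 - 1 - (i + 1)) : ℤ)
        = -((-1 : ℤ) ^ i * (i + 1 : ℤ) * (Nat.choose (n + 2) (m - 1 - i) : ℤ))
          - ((-1 : ℤ) ^ i * (Nat.choose ((n + 1) + 1) (m - 1 - i) : ℤ)) := by
      intro i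
      have : m + 1 - 1 - (i + 1) = m - 1 - i := by omega
      rw [this, pow_succ]
      push_cast
      ring
    have h2 : ∀ i ∈ Finset.range m, (-1 : ℤ) ^ (i + 1) * (((i + 1 : ℕ) : ℤ) + 1) * (Nat.choose (n + 2) (m + 1 - 1 - (i + 1)) : ℤ)
        = -((-1 : ℤ) ^ i * (i + 1 : ℤ) * (Nat.choose (n + 2) (m - 1 - i) : ℤ))
          - ((-1 : ℤ) ^ i * (Nat.choose ((n + 1) + 1) (m - 1 - i) : ℤ)) := fun i _ => h1 i
    rw [Finset.sum_congr rfl h2, Finset.sum_sub_distrib,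
      Finset.sum_neg_distrib, ih, auxA (n + 1) m]
    rcases Nat.eq_zero_or_pos m with hm | hm
    · subst hm; simp
    · obtain ⟨k, rfl⟩ := Nat.exists_eq_add_of_le hm
      have hk : (1 + k : ℕ) = k + 1 := by omega
      rw [hk]
      simp only [Nat.add_sub_cancel, pow_zero, one_mul, if_neg (by omega : ¬ k + 1 = 0),
        if_neg (by omega : ¬ k + 1 + 1 = 0)]
      have e1 : (n + 2).choose (k + 1) = (n + 1).choose k + (n + 1).choose (k + 1) :=
        Nat.choose_succ_succ _ _
      have e2 : (n + 1).choose (k + 1) = n.choose k + n.choose (k + 1) := Nat.choose_succ_succ _ _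
      push_cast [e1, e2]
      ring

theorem alternating_binom_identity (g m : ℕ) (hg : 1 ≤ g) (hm : 1 ≤ m) :
    ∑ i ∈ Finset.Icc 1 m,
        (-1 : ℤ) ^ (i + 1) * (i : ℤ) * (Nat.choose (2 * g) (m - i) : ℤ)
      = (Nat.choose (2 * g - 2) (m - 1) : ℤ) := by
  obtain ⟨n, hn⟩ : ∃ n, 2 * g = n + 2 := ⟨2 * g - 2, by omega⟩
  have h2 : 2 * g - 2 = n := by omega
  rw [h2, hn]
  rw [← Finset.Ico_add_one_right_eq_Icc, Finset.sum_Ico_eq_sum_range]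
  have hrw : ∀ i ∈ Finset.range (m + 1 - 1),
      (-1 : ℤ) ^ (1 + i + 1) * ((1 + i : ℕ) : ℤ) * (Nat.choose (n + 2) (m - (1 + i)) : ℤ)
        = (-1 : ℤ) ^ i * (i + 1 : ℤ) * (Nat.choose (n + 2) (m - 1 - i) : ℤ) := by
    intro i _
    have h3 : m - (1 + i) = m - 1 - i := by omega
    have h4 : (1 + i + 1) = i + 2 := by omega
    rw [h3, h4, pow_add]
    push_cast
    ring
  rw [Finset.sum_congr rfl hrw]
  have := auxS n m
  rw [Nat.add_sub_cancel] at *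
  rw [this, if_neg (by omega)]
end

section
/- For any two subspaces H and H' of ℚ³ (as a vector space over ℚ) each of dimension 2, there exists a matrix A in the special linear group SL(3, ℤ) such that the linear automorphism of ℚ³ induced by A (via the inclusion ℤ → ℚ) maps H' onto H. That is, SL₃(ℤ) acts transitively on the set of hyperplanes of ℚ³. -/
/-!
The integer points of a subspace `H ⊆ K^ι` form an `R`-lattice whose `K`-span is `H` (clear
denominators). A Smith normal form basis `b` of `R^ι` for this lattice has nonzero multiples of
`b (f 1), …, b (f k)` as a basis of it, so these `k` vectors span `H`. Permuting `b` moves `f` to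
any prescribed embedding, and rescaling one vector by a unit makes the matrix with columns `b`
unimodular of determinant one; this matrix maps the corresponding coordinate subspace onto `H`.
So every `k`-dimensional subspace lies in the `SL(ι, R)`-orbit of one coordinate subspace.
-/

open Module Submodule Set Matrix

theorem Submodule.span_range_smul_of_ne_zero {K V ι : Type*} [DivisionRing K] [AddCommGroup V]
    [Module K V] (c : ι → K) (hc : ∀ i, c i ≠ 0) (v : ι → V) :
    span K (range fun i => c i • v i) = span K (range v) := by
  apply le_antisymm <;> rw [span_le, range_subset_iff] <;> intro i
  · exact smul_mem _ _ (subset_span ⟨i, rfl⟩)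
  · rw [SetLike.mem_coe, ← smul_mem_iff _ (hc i)]
    exact subset_span ⟨i, rfl⟩

theorem Module.Basis.SmithNormalForm.span_image_eq {R M K V ι : Type*} [CommRing R]
    [Nontrivial R] [AddCommGroup M] [Module R M] [Field K] [Algebra R K] [FaithfulSMul R K]
    [AddCommGroup V] [Module K V] [Module R V] [IsScalarTower R K V] {N : Submodule R M}
    {n : ℕ} (snf : Basis.SmithNormalForm N ι n) (φ : M →ₗ[R] V) :
    span K (φ '' N) = span K (range (φ ∘ snf.bM ∘ snf.f)) := by
  have hN : (N : Set M) = span R (range fun i => (snf.bN i : M)) := by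
    rw [range_comp' Subtype.val, ← coe_subtype, ← map_span, snf.bN.span_eq, map_subtype_top]
  have ha : ∀ i, algebraMap R K (snf.a i) ≠ 0 := fun i ha =>
    snf.bN.ne_zero i <| Subtype.ext <| by
      rw [snf.snf, (FaithfulSMul.algebraMap_injective R K).eq_iff.mp (ha.trans (map_zero _).symm),
        zero_smul, coe_zero]
  calc span K (φ '' N) = span K (range fun i => φ (snf.bN i)) := by
        rw [hN, ← map_coe, map_span, span_span_of_tower, ← range_comp]; rfl
    _ = span K (range fun i => algebraMap R K (snf.a i) • φ (snf.bM (snf.f i))) := by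
        simp_rw [snf.snf, map_smul, algebraMap_smul]
    _ = _ := span_range_smul_of_ne_zero _ ha _

theorem Module.Basis.exists_unitsSMul_det_eq_one {R M ι : Type*} [CommRing R] [AddCommGroup M]
    [Module R M] [Fintype ι] [DecidableEq ι] (e b : Basis ι R M) :
    ∃ w : ι → Rˣ, e.det (b.unitsSMul w) = 1 := by
  obtain ⟨u, hu⟩ := e.isUnit_det b
  rcases isEmpty_or_nonempty ι with _ | ⟨⟨i₀⟩⟩
  · exact ⟨1, by simp [Basis.det_isEmpty]⟩
  · refine ⟨Function.update 1 i₀ u⁻¹, ?_⟩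
    rw [← e.det_mul_det b, det_unitsSMul_self, ← hu, ← Units.coe_prod,
      Finset.prod_update_of_mem (Finset.mem_univ _)]
    simp

theorem Module.Basis.exists_specialLinearGroup_col_eq_units_smul {R ι : Type*} [CommRing R]
    [Fintype ι] [DecidableEq ι] (b : Basis ι R (ι → R)) :
    ∃ (A : SpecialLinearGroup ι R) (w : ι → Rˣ),
      ∀ j, (A : Matrix ι ι R).col j = w j • b j := by
  obtain ⟨w, hw⟩ := (Pi.basisFun R ι).exists_unitsSMul_det_eq_one b
  refine ⟨⟨(Pi.basisFun R ι).toMatrix (b.unitsSMul w), by rwa [← Basis.det_apply]⟩, w,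
    fun j => ?_⟩
  ext i
  simp [Basis.toMatrix_apply, unitsSMul_apply]

theorem Matrix.SpecialLinearGroup.mulVecLin_map_mul {n R S : Type*} [Fintype n] [DecidableEq n]
    [CommRing R] [CommRing S] (f : R →+* S) (A B : SpecialLinearGroup n R) :
    ((↑(A * B) : Matrix n n R).map f).mulVecLin =
      ((A : Matrix n n R).map f).mulVecLin ∘ₗ ((B : Matrix n n R).map f).mulVecLin := by
  rw [coe_mul, Matrix.map_mul, mulVecLin_mul]

def Pi.algebraMapLinearMap (R K ι : Type*) [CommSemiring R] [Semiring K] [Algebra R K] :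
    (ι → R) →ₗ[R] (ι → K) :=
  (Algebra.linearMap R K).compLeft ι

section IntegerPoints

variable {R K ι : Type*} [CommRing R] [Field K] [Algebra R K] [IsFractionRing R K]

theorem Pi.algebraMapLinearMap_injective :
    Function.Injective (Pi.algebraMapLinearMap R K ι) :=
  (IsFractionRing.injective R K).comp_left

theorem Module.Basis.linearIndependent_algebraMap [IsDomain R] (b : Basis ι R (ι → R)) :
    LinearIndependent K (Pi.algebraMapLinearMap R K ι ∘ b) := by
  rw [← LinearIndependent.iff_fractionRing R K]
  exact b.linearIndependent.map' _ (LinearMap.ker_eq_bot.mpr Pi.algebraMapLinearMap_injective)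

variable (R) in
def Submodule.integerPoints (H : Submodule K (ι → K)) : Submodule R (ι → R) :=
  (H.restrictScalars R).comap (Pi.algebraMapLinearMap R K ι)

theorem Submodule.span_image_integerPoints [IsDomain R] [Finite ι] (H : Submodule K (ι → K)) :
    span K (Pi.algebraMapLinearMap R K ι '' H.integerPoints R) = H := by
  refine le_antisymm (span_le.mpr (image_subset_iff.mpr fun v hv => hv)) fun x hx => ?_
  obtain ⟨d, hd⟩ := IsLocalization.exist_integer_multiples_of_finite (nonZeroDivisors R) x
  choose v hv using hd
  have hdx : Pi.algebraMapLinearMap R K ι v = (d : R) • x := funext hv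
  have hd0 : algebraMap R K d ≠ 0 := IsFractionRing.to_map_ne_zero_of_mem_nonZeroDivisors d.2
  have hvH : v ∈ H.integerPoints R := by
    show Pi.algebraMapLinearMap R K ι v ∈ H
    rw [hdx]
    exact H.smul_of_tower_mem _ hx
  rw [← smul_mem_iff _ hd0, algebraMap_smul, ← hdx]
  exact subset_span (mem_image_of_mem _ hvH)

theorem Submodule.exists_basis_span_algebraMap_eq [IsDomain R] [IsPrincipalIdealRing R]
    [Finite ι] {k : ℕ} (H : Submodule K (ι → K)) (hH : finrank K H = k) :
    ∃ (b : Basis ι R (ι → R)) (f : Fin k ↪ ι),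
      span K (range (Pi.algebraMapLinearMap R K ι ∘ b ∘ f)) = H := by
  obtain ⟨n, snf⟩ := (H.integerPoints R).smithNormalForm (Pi.basisFun R ι)
  have hspan : span K (range (Pi.algebraMapLinearMap R K ι ∘ snf.bM ∘ snf.f)) = H := by
    rw [← snf.span_image_eq, span_image_integerPoints]
  have hn : finrank K H = n := by
    rw [← hspan]
    exact (finrank_span_eq_card
      ((snf.bM.linearIndependent_algebraMap).comp _ snf.f.injective)).trans (Fintype.card_fin n)
  obtain rfl : n = k := hn.symm.trans hH
  exact ⟨snf.bM, snf.f, hspan⟩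

theorem Submodule.exists_specialLinearGroup_map_span_single_eq [IsDomain R]
    [IsPrincipalIdealRing R] [Fintype ι] [DecidableEq ι] {k : ℕ} (H : Submodule K (ι → K))
    (hH : finrank K H = k) (e : Fin k ↪ ι) :
    ∃ A : SpecialLinearGroup ι R,
      (span K (range fun j => Pi.single (e j) (1 : K))).map
        ((A : Matrix ι ι R).map (algebraMap R K)).mulVecLin = H := by
  obtain ⟨b, f, hbf⟩ := H.exists_basis_span_algebraMap_eq (R := R) hH
  obtain ⟨σ, hσ⟩ := Equiv.Perm.exists_extending_pair e f e.injective f.injective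
  obtain ⟨A, w, hA⟩ := (b.reindex σ.symm).exists_specialLinearGroup_col_eq_units_smul
  have hcol : ∀ j, ((A : Matrix ι ι R).map (algebraMap R K)).mulVecLin (Pi.single (e j) 1) =
      algebraMap R K (w (e j)) • Pi.algebraMapLinearMap R K ι (b (f j)) := by
    intro j
    ext i
    have hAij := congrFun (hA (e j)) i
    simp only [col_apply, Basis.reindex_apply, Equiv.symm_symm, hσ, Pi.smul_apply,
      Units.smul_def, smul_eq_mul] at hAij
    simp [hAij, Pi.algebraMapLinearMap]
  refine ⟨A, ?_⟩
  rw [map_span, ← range_comp, ← hbf, ← span_range_smul_of_ne_zero _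
    (fun j => ((w (e j)).isUnit.map (algebraMap R K)).ne_zero) (_ ∘ b ∘ f)]
  simp_rw [Function.comp_def, hcol]

end IntegerPoints

theorem SL3Z_transitive_on_hyperplanes
    (H H' : Submodule ℚ (Fin 3 → ℚ))
    (hH : Module.finrank ℚ H = 2) (hH' : Module.finrank ℚ H' = 2) :
    ∃ A : Matrix.SpecialLinearGroup (Fin 3) ℤ,
      Submodule.map
        (Matrix.mulVecLin ((A : Matrix (Fin 3) (Fin 3) ℤ).map (fun x => (x : ℚ))))
        H' = H := by
  show ∃ A : SpecialLinearGroup (Fin 3) ℤ,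
    H'.map ((A : Matrix (Fin 3) (Fin 3) ℤ).map (algebraMap ℤ ℚ)).mulVecLin = H
  let e : Fin 2 ↪ Fin 3 := Fin.castLEEmb (by norm_num)
  obtain ⟨A, hA⟩ := H.exists_specialLinearGroup_map_span_single_eq (R := ℤ) hH e
  obtain ⟨B, hB⟩ := H'.exists_specialLinearGroup_map_span_single_eq (R := ℤ) hH' e
  refine ⟨A * B⁻¹, ?_⟩
  rw [← hA, ← hB, ← map_comp, ← SpecialLinearGroup.mulVecLin_map_mul, inv_mul_cancel_right]
end

section
/- Let g ≥ 1 be a natural number. For any two subspaces H and H' of ℚ^{2g} (with coordinates indexed by Fin g ⊕ Fin g) each of dimension 2g−1, there exists an integer matrix S in the symplectic group Sp(2g, ℤ) (that is, a (2g)×(2g) integer matrix satisfying Sᵀ J S = J, where J is the standard symplectic matrix) such that the linear automorphism of ℚ^{2g} induced by S maps H' onto H. That is, Sp(2g, ℤ) acts transitively on the set of hyperplanes of ℚ^{2g}. -/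
/-!
A hyperplane of `ℚ^{2g}` is the kernel of a unimodular integer covector `w` (clear denominators,
then divide by a generator of the ideal spanned by the entries), and `S` maps `ker w'` onto `ker w`
as soon as `Sᵀ w = w'`. As `Sp(2g, ℤ)` is closed under transposition, it suffices that it acts
transitively on unimodular vectors. The symplectic transvections `x ↦ x + c ω(u, x) u` realise the
elementary moves `aᵢ += c bᵢ`, `bᵢ += c aᵢ` and, when `bᵢ = 0`, `aᵢ += c aⱼ`; with them the
Euclidean algorithm reduces every vector to a multiple `d e₁` with `d ≥ 0`, and unimodularity
forces `d = 1`.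
-/

open Matrix Function MulAction Sum

lemma MulAction.mem_orbit_trans {M α : Type*} [Monoid M] [MulAction M α] {a b c : α}
    (hb : b ∈ orbit M a) (hc : c ∈ orbit M b) : c ∈ orbit M a := by
  obtain ⟨m, rfl⟩ := hc
  exact mem_orbit_of_mem_orbit m hb

section Unimodular

variable {κ R : Type*} [Fintype κ] [CommRing R]

def IsUnimodular (v : κ → R) : Prop := ∃ z : κ → R, z ⬝ᵥ v = 1

lemma IsUnimodular.mulVec [DecidableEq κ] {A B : Matrix κ κ R} (hBA : B * A = 1) {v : κ → R}
    (hv : IsUnimodular v) : IsUnimodular (A *ᵥ v) := by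
  obtain ⟨z, hz⟩ := hv
  exact ⟨z ᵥ* B, by rw [← dotProduct_mulVec, mulVec_mulVec, hBA, one_mulVec, hz]⟩

lemma isUnit_of_isUnimodular_single [DecidableEq κ] {p : κ} {d : R}
    (h : IsUnimodular (Pi.single p d)) : IsUnit d := by
  obtain ⟨z, hz⟩ := h
  rw [dotProduct_single] at hz
  exact IsUnit.of_mul_eq_one_right _ hz

variable [IsDomain R] [IsPrincipalIdealRing R]

lemma exists_eq_smul_isUnimodular {m : κ → R} (hm : m ≠ 0) :
    ∃ d : R, d ≠ 0 ∧ ∃ w : κ → R, IsUnimodular w ∧ m = d • w := by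
  let I := Ideal.span (Set.range m)
  choose w hw using fun i ↦
    (Submodule.IsPrincipal.mem_iff_eq_smul_generator I).mp (Ideal.subset_span ⟨i, rfl⟩)
  obtain ⟨c, hc⟩ := Ideal.mem_span_range_iff_exists_fun.mp (Submodule.IsPrincipal.generator_mem I)
  set d := Submodule.IsPrincipal.generator I
  have hmdw : m = d • w := funext fun i ↦ by simp [hw i, mul_comm]
  have hd : d ≠ 0 := fun hd ↦ hm (by simpa [hd] using hmdw)
  refine ⟨d, hd, w, ⟨c, mul_left_cancel₀ hd ?_⟩, hmdw⟩
  calc d * (c ⬝ᵥ w)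
      _ = ∑ i, c i * m i := by
        rw [dotProduct, Finset.mul_sum]
        exact Finset.sum_congr rfl fun i _ ↦ by rw [hw i, smul_eq_mul]; ring
      _ = d * 1 := by rw [hc, mul_one]

variable {K : Type*} [Field K] [Algebra R K] [IsFractionRing R K]

lemma exists_eq_smul_algebraMap_comp_isUnimodular {u : κ → K} (hu : u ≠ 0) :
    ∃ w : κ → R, IsUnimodular w ∧ ∃ r : K, r ≠ 0 ∧ u = r • (algebraMap R K ∘ w) := by
  obtain ⟨b, hb⟩ := IsLocalization.exist_integer_multiples (nonZeroDivisors R) Finset.univ u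
  choose m hm using fun i ↦ hb i (Finset.mem_univ i)
  have hb0 := IsFractionRing.to_map_ne_zero_of_mem_nonZeroDivisors (K := K) b.2
  have hm0 : m ≠ 0 := by
    rintro rfl
    exact hu (funext fun i ↦ by simpa [Algebra.smul_def, hb0] using (hm i).symm)
  obtain ⟨d, hd, w, hw, rfl⟩ := exists_eq_smul_isUnimodular hm0
  refine ⟨w, hw, algebraMap R K d / algebraMap R K b, ?_, funext fun i ↦ ?_⟩
  · exact div_ne_zero ((map_ne_zero_iff _ (IsFractionRing.injective R K)).mpr hd) hb0
  · have hmi := hm i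
    simp only [Pi.smul_apply, smul_eq_mul, map_mul, Algebra.smul_def] at hmi
    simp only [Pi.smul_apply, Function.comp_apply, smul_eq_mul]
    field_simp
    linear_combination -hmi

lemma Submodule.exists_isUnimodular_mem_iff_dotProduct_eq_zero {H : Submodule K (κ → K)}
    (hH : Module.finrank K H + 1 = Fintype.card κ) :
    ∃ w : κ → R, IsUnimodular w ∧ ∀ x, x ∈ H ↔ (algebraMap R K ∘ w) ⬝ᵥ x = 0 := by
  classical
  have hlt : H < ⊤ := lt_top_iff_ne_top.mpr fun h ↦ by
    rw [h, finrank_top, Module.finrank_fintype_fun_eq_card] at hH; omega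
  obtain ⟨f, hf, hHf⟩ := H.exists_le_ker_of_lt_top hlt
  have hker : H = LinearMap.ker f := Submodule.eq_of_le_of_finrank_le hHf <| by
    have := Submodule.finrank_lt (mt LinearMap.ker_eq_top.mp hf)
    rw [Module.finrank_fintype_fun_eq_card] at this; omega
  set u : κ → K := fun i ↦ f (Pi.single i 1)
  have hfu : ∀ x, f x = u ⬝ᵥ x := fun x ↦ by
    conv_lhs => rw [pi_eq_sum_univ' x]
    simp [dotProduct, u, mul_comm]
  have hu : u ≠ 0 := fun h ↦ hf (LinearMap.ext fun x ↦ by simp [hfu, h])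
  obtain ⟨w, hw, r, hr, hru⟩ := exists_eq_smul_algebraMap_comp_isUnimodular (R := R) hu
  exact ⟨w, hw, fun x ↦ by simp [hker, hfu, hru, smul_dotProduct, hr]⟩

end Unimodular

section Euclid

variable {α R : Type*} [DecidableEq α]

def ShearClosed [Semiring R] (O : Set (α → R)) (p q : α) : Prop :=
  ∀ y ∈ O, ∀ c : R, update y p (y p + c * y q) ∈ O

variable {O : Set (α → ℤ)} {p q : α}

lemma ShearClosed.update_update_rotate_mem (hpq : p ≠ q) (hp : ShearClosed O p q)
    (hq : ShearClosed O q p) {y : α → ℤ} (hy : y ∈ O) :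
    update (update y p (y q)) q (-y p) ∈ O := by
  convert hp _ (hq _ (hp y hy 1) (-1)) 1 using 1
  ext r
  by_cases hrp : r = p <;> by_cases hrq : r = q <;> simp [hrp, hrq, hpq, hpq.symm]

lemma ShearClosed.exists_nonneg_update_update_zero_mem (hpq : p ≠ q) (hp : ShearClosed O p q)
    (hq : ShearClosed O q p) {y : α → ℤ} (hy : y ∈ O) :
    ∃ d, 0 ≤ d ∧ update (update y p d) q 0 ∈ O := by
  have rotate := fun y (hy : y ∈ O) ↦ hp.update_update_rotate_mem hpq hq hy
  induction h : (y q).natAbs using Nat.strong_induction_on generalizing y with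
  | _ n ih =>
  by_cases hq0 : y q = 0
  · rcases le_or_gt 0 (y p) with hnn | hneg
    · exact ⟨y p, hnn, by simpa [← hq0] using hy⟩
    · refine ⟨-y p, by omega, ?_⟩
      convert rotate _ (rotate y hy) using 1
      ext r
      by_cases hrp : r = p <;> by_cases hrq : r = q <;> simp [hrp, hrq, hpq, hq0]
  -- `(y p, y q) ↦ (y p % y q, y q) ↦ (y q, -(y p % y q))`
  · have hstep := rotate _ (hp y hy (-(y p / y q)))
    have hlt : (-(y p % y q)).natAbs < n := by
      have := Int.emod_lt (y p) hq0
      have := Int.emod_nonneg (y p) hq0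
      omega
    obtain ⟨d, hd, hmem⟩ := ih _ hlt hstep (by simp [hpq.symm, Int.emod_def]; ring_nf)
    refine ⟨d, hd, ?_⟩
    convert hmem using 1
    ext r
    by_cases hrp : r = p <;> by_cases hrq : r = q <;> simp [hrp, hrq, hpq]

end Euclid

namespace Matrix

variable {ι R : Type*} [Fintype ι] [DecidableEq ι] [CommRing R]

lemma mem_symplecticGroup_iff_dotProduct {A : Matrix (ι ⊕ ι) (ι ⊕ ι) R} :
    A ∈ symplecticGroup ι R ↔ ∀ x y, A *ᵥ x ⬝ᵥ J ι R *ᵥ (A *ᵥ y) = x ⬝ᵥ J ι R *ᵥ y := by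
  rw [SymplecticGroup.mem_iff',
    ← (toLinearMap₂' R (S₁ := R) (S₂ := R) (N₂ := R)).injective.eq_iff, LinearMap.ext_iff₂]
  simp only [toLinearMap₂'_apply', ← mulVec_mulVec, dotProduct_mulVec _ Aᵀ, vecMul_transpose]

lemma dotProduct_J_mulVec_eq_neg (x y : ι ⊕ ι → R) :
    x ⬝ᵥ J ι R *ᵥ y = -(y ⬝ᵥ J ι R *ᵥ x) := by
  rw [dotProduct_mulVec, dotProduct_comm, ← mulVec_transpose, J_transpose, neg_mulVec,
    dotProduct_neg]

lemma J_mulVec (x : ι ⊕ ι → R) : J ι R *ᵥ x = Sum.elim (-(x ∘ inr)) (x ∘ inl) := by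
  simp [J, fromBlocks_mulVec, neg_mulVec]

lemma dotProduct_J_mulVec_self (x : ι ⊕ ι → R) : x ⬝ᵥ J ι R *ᵥ x = 0 := by
  simp [J_mulVec, dotProduct, Fintype.sum_sum_type, mul_comm]

def symplecticTransvection (u : ι ⊕ ι → R) (c : R) : Matrix (ι ⊕ ι) (ι ⊕ ι) R :=
  1 + c • vecMulVec u (u ᵥ* J ι R)

lemma symplecticTransvection_mulVec (u : ι ⊕ ι → R) (c : R) (x : ι ⊕ ι → R) :
    symplecticTransvection u c *ᵥ x = x + (c * (u ⬝ᵥ J ι R *ᵥ x)) • u := by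
  rw [symplecticTransvection, add_mulVec, one_mulVec, smul_mulVec, vecMulVec_mulVec,
    op_smul_eq_smul, smul_smul, dotProduct_mulVec]

lemma symplecticTransvection_mem (u : ι ⊕ ι → R) (c : R) :
    symplecticTransvection u c ∈ symplecticGroup ι R := by
  refine mem_symplecticGroup_iff_dotProduct.mpr fun x y ↦ ?_
  simp only [symplecticTransvection_mulVec, mulVec_add, mulVec_smul, add_dotProduct,
    dotProduct_add, smul_dotProduct, dotProduct_smul, smul_eq_mul, dotProduct_J_mulVec_self]
  rw [dotProduct_J_mulVec_eq_neg x u]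
  ring

instance : MulAction (symplecticGroup ι R) (ι ⊕ ι → R) where
  smul A x := (A : Matrix (ι ⊕ ι) (ι ⊕ ι) R) *ᵥ x
  one_smul := one_mulVec
  mul_smul A B x := (mulVec_mulVec x (A : Matrix (ι ⊕ ι) (ι ⊕ ι) R) B).symm

lemma symplecticGroup_smul_def (A : symplecticGroup ι R) (x : ι ⊕ ι → R) :
    A • x = (A : Matrix (ι ⊕ ι) (ι ⊕ ι) R) *ᵥ x := rfl

lemma _root_.IsUnimodular.symplecticGroup_smul (A : symplecticGroup ι R) {v : ι ⊕ ι → R}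
    (hv : IsUnimodular v) : IsUnimodular (A • v) :=
  hv.mulVec (congrArg Subtype.val (inv_mul_cancel A))

lemma add_smul_mem_orbit_symplecticGroup (u x : ι ⊕ ι → R) (c : R) :
    x + (c * (u ⬝ᵥ J ι R *ᵥ x)) • u ∈ orbit (symplecticGroup ι R) x :=
  ⟨⟨_, symplecticTransvection_mem u c⟩, symplecticTransvection_mulVec u c x⟩

lemma shearClosed_orbit_inl_inr (v : ι ⊕ ι → R) (i : ι) :
    ShearClosed (orbit (symplecticGroup ι R) v) (inl i) (inr i) := fun y hy c ↦ by
  convert mem_orbit_trans hy (add_smul_mem_orbit_symplecticGroup (Pi.single (inl i) 1) y (-c))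
    using 1
  ext p
  by_cases hp : p = inl i <;> simp [hp, J_mulVec]

lemma shearClosed_orbit_inr_inl (v : ι ⊕ ι → R) (i : ι) :
    ShearClosed (orbit (symplecticGroup ι R) v) (inr i) (inl i) := fun y hy c ↦ by
  convert mem_orbit_trans hy (add_smul_mem_orbit_symplecticGroup (Pi.single (inr i) 1) y c)
    using 1
  ext p
  by_cases hp : p = inr i <;> simp [hp, J_mulVec]

lemma shearClosed_orbit_inl_inl (v : ι ⊕ ι → R) {i j : ι} (hij : i ≠ j) :
    ShearClosed {y ∈ orbit (symplecticGroup ι R) v | ∀ k, y (inr k) = 0} (inl i) (inl j) := by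
  rintro y ⟨hy, hy0⟩ c
  refine ⟨?_, by simpa using hy0⟩
  set u : ι ⊕ ι → R := Pi.single (inl i) 1 + Pi.single (inr j) 1
  have hu : u ⬝ᵥ J ι R *ᵥ y = y (inl j) := by simp [u, J_mulVec, hy0]
  have h₁ := mem_orbit_trans hy (add_smul_mem_orbit_symplecticGroup u y c)
  rw [hu] at h₁
  -- the transvection along `u` also adds `c * y (inl j)` to `y (inr j)`; undo that
  convert shearClosed_orbit_inr_inl v j _ h₁ (-c) using 1
  ext (k | k) <;> by_cases hk : k = i <;> by_cases hk' : k = j <;>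
    simp [u, hk, hk', hij, hij.symm, hy0]

lemma exists_mem_orbit_symplecticGroup_forall_inr_eq_zero (v : ι ⊕ ι → ℤ) :
    ∃ y ∈ orbit (symplecticGroup ι ℤ) v, ∀ i, y (inr i) = 0 := by
  suffices ∀ s : Finset ι, ∃ y ∈ orbit (symplecticGroup ι ℤ) v, ∀ i ∈ s, y (inr i) = 0 by
    simpa using this Finset.univ
  intro s
  induction s using Finset.induction_on with
  | empty => exact ⟨v, mem_orbit_self v, by simp⟩
  | insert i s _ ih =>
    obtain ⟨y, hy, hys⟩ := ih
    obtain ⟨d, -, hmem⟩ := (shearClosed_orbit_inl_inr v i).exists_nonneg_update_update_zero_mem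
      inl_ne_inr (shearClosed_orbit_inr_inl v i) hy
    refine ⟨_, hmem, fun j hj ↦ ?_⟩
    by_cases hji : j = i
    · simp [hji]
    · simp [hji, hys j (Finset.mem_of_mem_insert_of_ne hj hji)]

lemma exists_single_mem_orbit_symplecticGroup (i₀ : ι) (v : ι ⊕ ι → ℤ) :
    ∃ d, Pi.single (inl i₀) d ∈ orbit (symplecticGroup ι ℤ) v := by
  set O := {y ∈ orbit (symplecticGroup ι ℤ) v | ∀ i, y (inr i) = 0}
  suffices ∀ s : Finset ι, ∃ y ∈ O, ∀ j ∈ s, j ≠ i₀ → y (inl j) = 0 by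
    obtain ⟨y, ⟨hy, hyr⟩, hyl⟩ := this Finset.univ
    refine ⟨y (inl i₀), ?_⟩
    convert hy using 1
    ext (k | k)
    · by_cases hk : k = i₀ <;> simp [hk, hyl k (Finset.mem_univ k)]
    · simp [hyr k]
  intro s
  induction s using Finset.induction_on with
  | empty =>
    obtain ⟨y, hy, hyr⟩ := exists_mem_orbit_symplecticGroup_forall_inr_eq_zero v
    exact ⟨y, ⟨hy, hyr⟩, by simp⟩
  | insert j s _ ih =>
    obtain ⟨y, hy, hys⟩ := ih
    by_cases hj : j = i₀
    · exact ⟨y, hy, by simpa [hj] using hys⟩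
    obtain ⟨d, -, hmem⟩ :=
      (shearClosed_orbit_inl_inl v (Ne.symm hj)).exists_nonneg_update_update_zero_mem
        (inl_injective.ne (Ne.symm hj)) (shearClosed_orbit_inl_inl v hj) hy
    refine ⟨_, hmem, fun k hk hki ↦ ?_⟩
    by_cases hkj : k = j
    · simp [hkj]
    · simp [hkj, hki, hys k (Finset.mem_of_mem_insert_of_ne hk hkj) hki]

lemma single_one_mem_orbit_symplecticGroup_of_isUnimodular (i₀ : ι) {v : ι ⊕ ι → ℤ}
    (hv : IsUnimodular v) :
    Pi.single (inl i₀) 1 ∈ orbit (symplecticGroup ι ℤ) v := by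
  obtain ⟨d, hd⟩ := exists_single_mem_orbit_symplecticGroup i₀ v
  obtain ⟨e, he, A, hA : A • v = _⟩ :=
    (shearClosed_orbit_inl_inr v i₀).exists_nonneg_update_update_zero_mem inl_ne_inr
      (shearClosed_orbit_inr_inl v i₀) hd
  have hAv : A • v = Pi.single (inl i₀) e := by
    rw [hA]; ext k; by_cases hk : k = inl i₀ <;> by_cases hk' : k = inr i₀ <;> simp [hk, hk']
  have hunit := isUnit_of_isUnimodular_single (hAv ▸ hv.symplecticGroup_smul A)
  obtain rfl : e = 1 := by rcases Int.isUnit_iff.mp hunit with h | h <;> omega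
  exact ⟨A, hAv⟩

lemma mem_orbit_symplecticGroup_of_isUnimodular {v w : ι ⊕ ι → ℤ} (hv : IsUnimodular v)
    (hw : IsUnimodular w) :
    w ∈ orbit (symplecticGroup ι ℤ) v := by
  cases isEmpty_or_nonempty ι with
  | inl _ => exact Subsingleton.elim v w ▸ mem_orbit_self v
  | inr h =>
    obtain ⟨i₀⟩ := h
    exact mem_orbit_trans (single_one_mem_orbit_symplecticGroup_of_isUnimodular i₀ hv)
      (mem_orbit_symm.mp (single_one_mem_orbit_symplecticGroup_of_isUnimodular i₀ hw))

end Matrix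

lemma Submodule.map_mulVecLin_eq_of_vecMul_eq {K κ : Type*} [CommRing K] [Fintype κ]
    [DecidableEq κ] {A : Matrix κ κ K} (hA : IsUnit A) {H H' : Submodule K (κ → K)}
    {w w' : κ → K} (hH : ∀ x, x ∈ H ↔ w ⬝ᵥ x = 0) (hH' : ∀ x, x ∈ H' ↔ w' ⬝ᵥ x = 0)
    (hw : w ᵥ* A = w') : H'.map A.mulVecLin = H := by
  have : H' = H.comap A.mulVecLin := by ext x; simp [hH, hH', dotProduct_mulVec, hw]
  rw [this, Submodule.map_comap_eq_of_surjective (mulVec_surjective_iff_isUnit.mpr hA)]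

theorem Sp2gZ_transitive_on_hyperplanes (g : ℕ) (hg : 1 ≤ g)
    (H H' : Submodule ℚ ((Fin g ⊕ Fin g) → ℚ))
    (hH : Module.finrank ℚ H = 2 * g - 1) (hH' : Module.finrank ℚ H' = 2 * g - 1) :
    ∃ S ∈ Matrix.symplecticGroup (Fin g) ℤ,
      Submodule.map
        (Matrix.mulVecLin (S.map (fun x : ℤ => (x : ℚ))))
        H' = H := by
  have hcard (H : Submodule ℚ (Fin g ⊕ Fin g → ℚ)) (h : Module.finrank ℚ H = 2 * g - 1) :
      Module.finrank ℚ H + 1 = Fintype.card (Fin g ⊕ Fin g) := by simp; omega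
  obtain ⟨w, hw, hHw⟩ := H.exists_isUnimodular_mem_iff_dotProduct_eq_zero (R := ℤ) (hcard H hH)
  obtain ⟨w', hw', hH'w'⟩ :=
    H'.exists_isUnimodular_mem_iff_dotProduct_eq_zero (R := ℤ) (hcard H' hH')
  obtain ⟨T, hT : T • w = w'⟩ := mem_orbit_symplecticGroup_of_isUnimodular hw hw'
  have hS := SymplecticGroup.transpose_mem T.2
  refine ⟨_, hS, Submodule.map_mulVecLin_eq_of_vecMul_eq ?_ hHw hH'w' ?_⟩
  · exact (isUnit_iff_isUnit_det _).mpr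
      (SymplecticGroup.symplectic_det (SymplecticGroup.map_mem hS (Int.castRingHom ℚ)))
  · rw [← hT, symplecticGroup_smul_def, transpose_map, vecMul_transpose]
    ext i
    exact ((Int.castRingHom ℚ).map_mulVec T w i).symm
end
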